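/- arXiv:1905.06595 — 2 statements merged into one kernel-verified Lean document; each statement's English description precedes it below -/
import Mathlib

section
/- Let P = (v₀,v₁,…,v_{2p+1}) be a path with edges e_i = v_{i−1}v_i for 1 ≤ i ≤ 2p+1, where p ≥ 2, and let m ≥ 2p+1. Define φ(e_{2i+1}) = i+1 for 0 ≤ i ≤ p and φ(e_{2i}) = m−p+i for 1 ≤ i ≤ p. Then the vertex sums in P satisfy: s(v₀) = 1, s(v_{2p+1}) = p+1, and s(v_i) = m−p+i+1 for 1 ≤ i ≤ 2p; moreover the residues of the vertex sums modulo m+2 form the set ([0,p+1]∖{p}) ∪ [m−p+2,m+1], and the only pair of vertices whose sums agree modulo m+2 is (v₀, v_{p+2}). -/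
/-!
Adjacent edge labels add up to `s(v_i) = m - p + i + 1` for `1 ≤ i ≤ 2p`. Modulo `m + 2`
the sums with `i ≤ p` stay in `[m - p + 2, m + 1]`, while those with `i > p` wrap around to
`i - p - 1 ∈ [0, p - 1]`; the end vertices add the residues `1` and `p + 1`. All these
residues are distinct except `s(v₀) = 1 = s(v_{p+2}) - (m + 2)`.
-/

lemma vertexSum_eq_of_mem_Icc {p m : ℕ} {φ s : ℕ → ℕ}
    (hφodd : ∀ i ≤ p, φ (2 * i + 1) = i + 1)
    (hφeven : ∀ i, 1 ≤ i → i ≤ p → φ (2 * i) = m - p + i)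
    (hsmid : ∀ i, 1 ≤ i → i ≤ 2 * p → s i = φ i + φ (i + 1))
    (i : ℕ) (hi₁ : 1 ≤ i) (hi₂ : i ≤ 2 * p) : s i = m - p + i + 1 := by
  rw [hsmid i hi₁ hi₂]
  obtain ⟨k, rfl | rfl⟩ := Nat.even_or_odd' i
  · rw [hφeven k (by omega) (by omega), hφodd k (by omega)]
    omega
  · rw [show 2 * k + 1 + 1 = 2 * (k + 1) by ring, hφodd k (by omega),
      hφeven (k + 1) (by omega) (by omega)]
    omega

def vertexSumResidue (p m i : ℕ) : ℕ :=
  if i = 0 then 1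
  else if i = 2 * p + 1 then p + 1
  else if i ≤ p then m - p + i + 1
  else i - p - 1

lemma mod_eq_vertexSumResidue {p m : ℕ} {s : ℕ → ℕ} (hm : p ≤ m)
    (h0 : s 0 = 1) (hlast : s (2 * p + 1) = p + 1)
    (hmid : ∀ i, 1 ≤ i → i ≤ 2 * p → s i = m - p + i + 1)
    (i : ℕ) (hi : i ≤ 2 * p + 1) : s i % (m + 2) = vertexSumResidue p m i := by
  unfold vertexSumResidue
  split_ifs with h0' hlast' hip
  · rw [h0', h0, Nat.mod_eq_of_lt (by omega)]
  · rw [hlast', hlast, Nat.mod_eq_of_lt (by omega)]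
  · rw [hmid i (by omega) (by omega), Nat.mod_eq_of_lt (by omega)]
  · rw [hmid i (by omega) (by omega), Nat.mod_eq_sub_mod (by omega),
      Nat.mod_eq_of_lt (by omega)]
    omega

lemma range_vertexSumResidue {p m : ℕ} (hp : 2 ≤ p) (hm : p ≤ m) :
    {x : ℕ | ∃ i ≤ 2 * p + 1, vertexSumResidue p m i = x} =
      (Set.Icc 0 (p + 1) \ {p}) ∪ Set.Icc (m - p + 2) (m + 1) := by
  ext x
  simp only [Set.mem_ofPred_eq, Set.mem_union, Set.mem_sdiff, Set.mem_Icc,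
    Set.mem_singleton_iff, vertexSumResidue]
  constructor
  · rintro ⟨i, hi, rfl⟩
    split_ifs <;> omega
  · rintro (⟨⟨-, hx⟩, hxp⟩ | ⟨hx₁, hx₂⟩)
    · obtain rfl | hx := eq_or_lt_of_le (show x ≤ p + 1 by omega)
      · exact ⟨2 * p + 1, le_rfl, by simp⟩
      · exact ⟨p + 1 + x, by omega, by split_ifs <;> omega⟩
    · exact ⟨x - (m - p) - 1, by omega, by split_ifs <;> omega⟩

lemma vertexSumResidue_eq_iff {p m i j : ℕ} (hp : 2 ≤ p) (hm : 2 * p ≤ m)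
    (hi : i ≤ 2 * p + 1) (hj : j ≤ 2 * p + 1) (hij : i ≠ j) :
    vertexSumResidue p m i = vertexSumResidue p m j ↔
      i = 0 ∧ j = p + 2 ∨ i = p + 2 ∧ j = 0 := by
  unfold vertexSumResidue
  split_ifs <;> omega

/-- Let `P = (v₀, …, v_{2p+1})` be a path with edges `e_i = v_{i-1} v_i` for
`1 ≤ i ≤ 2p+1`, where `p ≥ 2` and `m ≥ 2p+1`. Label `φ(e_{2i+1}) = i+1` for
`0 ≤ i ≤ p` and `φ(e_{2i}) = m−p+i` for `1 ≤ i ≤ p`. Here `s i` denotes the vertex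
sum of `v_i`: `s 0 = φ(e_1)`, `s (2p+1) = φ(e_{2p+1})`, `s i = φ(e_i) + φ(e_{i+1})`
for `1 ≤ i ≤ 2p`. Then `s(v₀) = 1`, `s(v_{2p+1}) = p+1`, `s(v_i) = m−p+i+1` for
`1 ≤ i ≤ 2p`; the residues of the vertex sums modulo `m+2` form the set
`([0,p+1] \ {p}) ∪ [m−p+2, m+1]`; and the only pair of distinct vertices with equal
sums modulo `m+2` is `(v₀, v_{p+2})`. -/
theorem stmt7 (p m : ℕ) (hp : 2 ≤ p) (hm : 2 * p + 1 ≤ m)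
    (φ : ℕ → ℕ)
    (hφodd : ∀ i ≤ p, φ (2 * i + 1) = i + 1)
    (hφeven : ∀ i, 1 ≤ i → i ≤ p → φ (2 * i) = m - p + i)
    (s : ℕ → ℕ)
    (hs0 : s 0 = φ 1)
    (hslast : s (2 * p + 1) = φ (2 * p + 1))
    (hsmid : ∀ i, 1 ≤ i → i ≤ 2 * p → s i = φ i + φ (i + 1)) :
    (s 0 = 1 ∧ s (2 * p + 1) = p + 1 ∧
      ∀ i, 1 ≤ i → i ≤ 2 * p → s i = m - p + i + 1) ∧
    ({x : ℕ | ∃ i ≤ 2 * p + 1, s i % (m + 2) = x} =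
      (Set.Icc 0 (p + 1) \ {p}) ∪ Set.Icc (m - p + 2) (m + 1)) ∧
    (∀ i j, i ≤ 2 * p + 1 → j ≤ 2 * p + 1 → i ≠ j →
      (s i % (m + 2) = s j % (m + 2) ↔ ({i, j} : Set ℕ) = {0, p + 2})) := by
  have h0 : s 0 = 1 := hs0.trans (hφodd 0 p.zero_le)
  have hlast : s (2 * p + 1) = p + 1 := hslast.trans (hφodd p le_rfl)
  have hmid := vertexSum_eq_of_mem_Icc hφodd hφeven hsmid
  have hres := mod_eq_vertexSumResidue (by omega) h0 hlast hmid
  refine ⟨⟨h0, hlast, hmid⟩, ?_, fun i j hi hj hij => ?_⟩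
  · rw [← range_vertexSumResidue hp (by omega)]
    exact Set.ext fun x => exists_congr fun i =>
      and_congr_right fun hi => by rw [hres i hi]
  · rw [hres i hi, hres j hj, vertexSumResidue_eq_iff hp (by omega) hi hj hij,
      Set.pair_eq_pair_iff]
end

section
/- Let p ≥ 1, ℓ ≥ 1, and m ≥ 2(p+ℓ)+1. Consider the tree T₁ formed by a path (v₀,…,v_{2p}) together with a path (x₀ = v_{2p+1}, x₁, …, x_ℓ) attached at v_{2p} via edge e_{2p+1} = v_{2p}x₀, and pendant vertices y₀,…,y_{ℓ−1} with edges x_i y_i. Label: φ(e_{2i−1}) = m−p+i and φ(e_{2i}) = i for 1 ≤ i ≤ (p−2)/2 (p even), φ(e_{2i+1}) = i+1 and φ(e_{2i}) = m−p+i on the remaining path edges as in the base labeling, φ(e_{2p+1}) = p+ℓ+1, φ(x_i x_{i+1}) = p+i+1 for 0 ≤ i ≤ ℓ−1, and φ(x_i y_i) = m−p−i for 0 ≤ i ≤ ℓ−1. Then the set of labels used is [1, p+ℓ+1] ∪ [m−p−ℓ+1, m], the residues of the vertex sums modulo m+2 form [0, p+ℓ] ∪ ([m−p−ℓ+1, m+1]∖{m−1}),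 and the only two vertices with equal residue are x₀ and x_ℓ, which nevertheless have different vertex sums (s(x₀) = m+p+ℓ+2 > p+ℓ = s(x_ℓ)). -/
/-!
After the swaps, the path edge `e_i` (`1 ≤ i ≤ 2p`) carries the large label `m - p + ⌈i/2⌉` when
`i` is odd and `i < p - 1` or `i` is even and `i ≥ p`, and the small label `⌈i/2⌉` otherwise
(`pathLabel`). So consecutive path edges carry one large and one small label, except at `v_{p-2}`
where both are small, and every vertex sum has a closed form (`pathSum`, `legSum`, and
`s(y_i) = m - p - i`). All of them are below `2(m + 2)`, so reduction modulo `m + 2` subtracts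
`m + 2` at most once (`pathResidue`, `legResidue`), and each claim becomes linear arithmetic on
these closed forms.
-/

theorem Nat.mod_eq_ite_of_lt_two_mul {a n : ℕ} (h : a < 2 * n) :
    a % n = if a < n then a else a - n := by
  split_ifs with ha
  · exact Nat.mod_eq_of_lt ha
  · rw [Nat.mod_eq_sub_mod (not_lt.mp ha), Nat.mod_eq_of_lt (by omega)]

def pathLabel (p m i : ℕ) : ℕ :=
  if i % 2 = 1 ∧ i < p - 1 ∨ i % 2 = 0 ∧ p ≤ i then m - p + (i + 1) / 2 else (i + 1) / 2

def pathSum (p ℓ m i : ℕ) : ℕ :=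
  if i = p - 2 then p - 1 else if i = 2 * p then m + p + ℓ + 1 else m - p + i + 1

def legSum (p ℓ m i : ℕ) : ℕ :=
  if i = 0 then m + p + ℓ + 2 else if i = ℓ then p + ℓ else m + p + i + 1

def pathResidue (p ℓ m i : ℕ) : ℕ :=
  if i = p - 2 then p - 1 else if i = 2 * p then p + ℓ - 1
  else if i ≤ p then m - p + i + 1 else i - p - 1

def legResidue (p ℓ i : ℕ) : ℕ :=
  if 0 < i ∧ i < ℓ then p + i - 1 else p + ℓ

variable {p ℓ m : ℕ}

theorem pathLabel_eq {φe : ℕ → ℕ} (hpeven : Even p)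
    (hswap : ∀ i, 1 ≤ i → i ≤ (p - 2) / 2 →
      φe (2 * i - 1) = m - p + i ∧ φe (2 * i) = i)
    (hbaseodd : ∀ i, (p - 2) / 2 ≤ i → i ≤ p - 1 → φe (2 * i + 1) = i + 1)
    (hbaseeven : ∀ i, (p - 2) / 2 < i → i ≤ p → φe (2 * i) = m - p + i)
    {i : ℕ} (hi₁ : 1 ≤ i) (hi₂ : i ≤ 2 * p) : φe i = pathLabel p m i := by
  have hpmod : p % 2 = 0 := Nat.even_iff.mp hpeven
  unfold pathLabel
  obtain ⟨j, rfl | rfl⟩ := Nat.even_or_odd' i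
  · by_cases hj : j ≤ (p - 2) / 2
    · rw [(hswap j (by omega) hj).2]
      split_ifs <;> omega
    · rw [hbaseeven j (by omega) (by omega)]
      split_ifs <;> omega
  · by_cases hj : j + 1 ≤ (p - 2) / 2
    · have h := (hswap (j + 1) (by omega) hj).1
      rw [show 2 * (j + 1) - 1 = 2 * j + 1 by omega] at h
      rw [h]
      split_ifs <;> omega
    · rw [hbaseodd j (by omega) (by omega)]
      split_ifs <;> omega

theorem pathSum_eq {φe sv : ℕ → ℕ} (hp : 1 ≤ p) (hpeven : Even p) (hpm : p ≤ m)
    (hpath : ∀ i, 1 ≤ i → i ≤ 2 * p → φe i = pathLabel p m i)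
    (hlast : φe (2 * p + 1) = p + ℓ + 1)
    (hsv0 : sv 0 = φe 1) (hsvi : ∀ i, 1 ≤ i → i ≤ 2 * p → sv i = φe i + φe (i + 1))
    {i : ℕ} (hi : i ≤ 2 * p) : sv i = pathSum p ℓ m i := by
  have hpmod : p % 2 = 0 := Nat.even_iff.mp hpeven
  unfold pathSum
  rcases Nat.eq_zero_or_pos i with rfl | hi₀
  · rw [hsv0, hpath 1 le_rfl (by omega)]
    unfold pathLabel
    split_ifs <;> omega
  · rcases Nat.lt_or_eq_of_le hi with hi' | rfl
    · rw [hsvi i hi₀ (by omega), hpath i hi₀ (by omega), hpath (i + 1) (by omega) hi']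
      unfold pathLabel
      split_ifs <;> omega
    · rw [hsvi _ hi₀ le_rfl, hpath _ hi₀ le_rfl, hlast]
      unfold pathLabel
      split_ifs <;> omega

theorem legSum_eq {φe φx φy sx : ℕ → ℕ} (hℓ : 1 ≤ ℓ) (hm : p + ℓ ≤ m)
    (hlast : φe (2 * p + 1) = p + ℓ + 1)
    (hφx : ∀ i < ℓ, φx i = p + i + 1) (hφy : ∀ i < ℓ, φy i = m - p - i)
    (hsx0 : sx 0 = φe (2 * p + 1) + φx 0 + φy 0)
    (hsxi : ∀ i, 1 ≤ i → i ≤ ℓ - 1 → sx i = φx (i - 1) + φx i + φy i)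
    (hsxl : sx ℓ = φx (ℓ - 1)) {i : ℕ} (hi : i ≤ ℓ) : sx i = legSum p ℓ m i := by
  unfold legSum
  split_ifs with h₀ hℓi
  · rw [h₀, hsx0, hlast, hφx 0 hℓ, hφy 0 hℓ]
    omega
  · rw [hℓi, hsxl, hφx (ℓ - 1) (by omega)]
    omega
  · rw [hsxi i (by omega) (by omega), hφx (i - 1) (by omega), hφx i (by omega),
      hφy i (by omega)]
    omega

theorem pathSum_mod (hm : 2 * (p + ℓ) + 1 ≤ m) {i : ℕ} (hi : i ≤ 2 * p) :
    pathSum p ℓ m i % (m + 2) = pathResidue p ℓ m i := by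
  unfold pathSum pathResidue
  split_ifs <;> rw [Nat.mod_eq_ite_of_lt_two_mul (by omega)] <;> split_ifs <;> omega

theorem legSum_mod (hm : 2 * (p + ℓ) + 1 ≤ m) {i : ℕ} (hi : i ≤ ℓ) :
    legSum p ℓ m i % (m + 2) = legResidue p ℓ i := by
  unfold legSum legResidue
  split_ifs <;> rw [Nat.mod_eq_ite_of_lt_two_mul (by omega)] <;> split_ifs <;> omega

theorem pathResidue_injOn (hℓ : 1 ≤ ℓ) (hm : 2 * (p + ℓ) + 1 ≤ m) :
    Set.InjOn (pathResidue p ℓ m) (Set.Iic (2 * p)) := by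
  intro i hi j hj h
  simp only [Set.mem_Iic] at hi hj
  unfold pathResidue at h
  split_ifs at h <;> omega

theorem legResidue_eq_legResidue {i j : ℕ} (hi : i ≤ ℓ) (hj : j ≤ ℓ)
    (h : legResidue p ℓ i = legResidue p ℓ j) : i = j ∨ ({i, j} : Set ℕ) = {0, ℓ} := by
  have : i = j ∨ (i = 0 ∧ j = ℓ) ∨ (i = ℓ ∧ j = 0) := by
    unfold legResidue at h
    split_ifs at h <;> omega
  rcases this with h | ⟨rfl, rfl⟩ | ⟨rfl, rfl⟩
  · exact .inl h
  · exact .inr rfl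
  · exact .inr (Set.pair_comm _ _)

theorem pathResidue_ne_legResidue (hp : 1 ≤ p) (hm : 2 * (p + ℓ) + 1 ≤ m) {i : ℕ}
    (hi : i ≤ 2 * p) (j : ℕ) : pathResidue p ℓ m i ≠ legResidue p ℓ j := by
  unfold pathResidue legResidue
  split_ifs <;> omega

theorem pathResidue_ne_pendant (hm : 2 * (p + ℓ) + 1 ≤ m) {i j : ℕ} (hi : i ≤ 2 * p)
    (hj : j < ℓ) : pathResidue p ℓ m i ≠ m - p - j := by
  unfold pathResidue
  split_ifs <;> omega

theorem legResidue_ne_pendant (hm : 2 * (p + ℓ) + 1 ≤ m) (i : ℕ) {j : ℕ} (hj : j < ℓ) :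
    legResidue p ℓ i ≠ m - p - j := by
  unfold legResidue
  split_ifs <;> omega

theorem vertexSumResidues_eq (hp : 2 ≤ p) (hm : 2 * (p + ℓ) + 1 ≤ m) :
    pathResidue p ℓ m '' Set.Iic (2 * p) ∪ legResidue p ℓ '' Set.Iic ℓ ∪
      (fun j ↦ m - p - j) '' Set.Iio ℓ =
      Set.Icc 0 (p + ℓ) ∪ (Set.Icc (m - p - ℓ + 1) (m + 1) \ {m - 1}) := by
  ext x
  simp only [Set.mem_union, Set.mem_image, Set.mem_Iic, Set.mem_Iio, Set.mem_Icc,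
    Set.mem_sdiff, Set.mem_singleton_iff]
  constructor
  · rintro ((⟨i, hi, rfl⟩ | ⟨i, hi, rfl⟩) | ⟨i, hi, rfl⟩)
    · unfold pathResidue; split_ifs <;> omega
    · unfold legResidue; split_ifs <;> omega
    · omega
  · rintro (⟨-, hx⟩ | ⟨⟨hx₁, hx₂⟩, hx₃⟩)
    · obtain h | h | h | h | h : x < p - 1 ∨ x = p - 1 ∨ p ≤ x ∧ x < p + ℓ - 1 ∨
          x = p + ℓ - 1 ∨ x = p + ℓ := by omega
      · exact .inl (.inl ⟨x + p + 1, by omega, by unfold pathResidue; split_ifs <;> omega⟩)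
      · exact .inl (.inl ⟨p - 2, by omega, by unfold pathResidue; split_ifs <;> omega⟩)
      · exact .inl (.inr ⟨x - p + 1, by omega, by unfold legResidue; split_ifs <;> omega⟩)
      · exact .inl (.inl ⟨2 * p, by omega, by unfold pathResidue; split_ifs <;> omega⟩)
      · exact .inl (.inr ⟨ℓ, by omega, by unfold legResidue; split_ifs <;> omega⟩)
    · by_cases h : x ≤ m - p
      · exact .inr ⟨m - p - x, by omega, by omega⟩
      · exact .inl (.inl ⟨x - (m - p + 1), by omega,
          by unfold pathResidue; split_ifs <;> omega⟩)

theorem edgeLabels_eq {φe φx φy : ℕ → ℕ} (hpeven : Even p) (hm : p + ℓ ≤ m)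
    (hpath : ∀ i, 1 ≤ i → i ≤ 2 * p → φe i = pathLabel p m i)
    (hlast : φe (2 * p + 1) = p + ℓ + 1)
    (hφx : ∀ i < ℓ, φx i = p + i + 1) (hφy : ∀ i < ℓ, φy i = m - p - i) :
    {n : ℕ | ∃ i, 1 ≤ i ∧ i ≤ 2 * p + 1 ∧ φe i = n} ∪
      {n : ℕ | ∃ i < ℓ, φx i = n} ∪ {n : ℕ | ∃ i < ℓ, φy i = n} =
      Set.Icc 1 (p + ℓ + 1) ∪ Set.Icc (m - p - ℓ + 1) m := by
  have hpmod : p % 2 = 0 := Nat.even_iff.mp hpeven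
  ext n
  simp only [Set.mem_union, Set.mem_ofPred_eq, Set.mem_Icc]
  constructor
  · rintro ((⟨i, hi₁, hi₂, rfl⟩ | ⟨i, hi, rfl⟩) | ⟨i, hi, rfl⟩)
    · rcases Nat.lt_or_eq_of_le hi₂ with hi₂ | rfl
      · rw [hpath i hi₁ (by omega)]
        unfold pathLabel
        split_ifs <;> omega
      · omega
    · rw [hφx i hi]
      omega
    · rw [hφy i hi]
      omega
  · have onPath (i : ℕ) (hi₁ : 1 ≤ i) (hi₂ : i ≤ 2 * p) (h : pathLabel p m i = n) :
        ∃ i, 1 ≤ i ∧ i ≤ 2 * p + 1 ∧ φe i = n :=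
      ⟨i, hi₁, by omega, (hpath i hi₁ hi₂).trans h⟩
    rintro (⟨hn₁, hn₂⟩ | ⟨hn₁, hn₂⟩)
    · obtain h | h | h | h : n < p / 2 ∨ p / 2 ≤ n ∧ n ≤ p ∨ p < n ∧ n ≤ p + ℓ ∨
          n = p + ℓ + 1 := by omega
      · exact .inl (.inl (onPath (2 * n) (by omega) (by omega)
          (by unfold pathLabel; split_ifs <;> omega)))
      · exact .inl (.inl (onPath (2 * n - 1) (by omega) (by omega)
          (by unfold pathLabel; split_ifs <;> omega)))
      · exact .inl (.inr ⟨n - p - 1, by omega, by rw [hφx (n - p - 1) (by omega)]; omega⟩)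
      · exact .inl (.inl ⟨2 * p + 1, by omega, le_rfl, by rw [hlast, h]⟩)
    · obtain h | h | h :
          n ≤ m - p ∨ m - p < n ∧ n < m - p / 2 ∨ m - p < n ∧ m - p / 2 ≤ n := by omega
      · exact .inr ⟨m - p - n, by omega, by rw [hφy (m - p - n) (by omega)]; omega⟩
      · exact .inl (.inl (onPath (2 * (n - (m - p)) - 1) (by omega) (by omega)
          (by unfold pathLabel; split_ifs <;> omega)))
      · exact .inl (.inl (onPath (2 * (n - (m - p))) (by omega) (by omega)
          (by unfold pathLabel; split_ifs <;> omega)))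

/-- Let `p ≥ 1` be even, `ℓ ≥ 1`, `m ≥ 2(p+ℓ)+1`. Consider the tree `T₁` formed by a
path `(v₀, …, v_{2p})` with edges `e_i = v_{i−1}v_i`, together with a path
`(x₀ = v_{2p+1}, x₁, …, x_ℓ)` attached at `v_{2p}` via the edge `e_{2p+1} = v_{2p}x₀`,
and pendant vertices `y₀, …, y_{ℓ−1}` with edges `x_i y_i`. Here `φe i`, `φx i`, `φy i`
are the labels of `e_i`, `x_i x_{i+1}`, `x_i y_i`, and `sv i`, `sx i`, `sy i` are the
vertex sums at `v_i`, `x_i`, `y_i` in `T₁`. Labels: swapped labels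
`φ(e_{2i−1}) = m−p+i`, `φ(e_{2i}) = i` for `1 ≤ i ≤ (p−2)/2`; base labels
`φ(e_{2i+1}) = i+1` for `(p−2)/2 ≤ i ≤ p−1` and `φ(e_{2i}) = m−p+i` for
`(p−2)/2 < i ≤ p`; `φ(e_{2p+1}) = p+ℓ+1`, `φ(x_i x_{i+1}) = p+i+1` and
`φ(x_i y_i) = m−p−i` for `0 ≤ i ≤ ℓ−1`. Then the set of labels used is
`[1, p+ℓ+1] ∪ [m−p−ℓ+1, m]`; the residues of the vertex sums modulo `m+2` form
`[0, p+ℓ] ∪ ([m−p−ℓ+1, m+1] \ {m−1})`; the only two vertices with equal residue are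
`x₀` and `x_ℓ`; and they nevertheless have different vertex sums:
`s(x₀) = m+p+ℓ+2 > p+ℓ = s(x_ℓ)`. -/
theorem stmt15 (p ℓ m : ℕ) (hp : 1 ≤ p) (hpeven : Even p) (hℓ : 1 ≤ ℓ)
    (hm : 2 * (p + ℓ) + 1 ≤ m)
    (φe φx φy : ℕ → ℕ)
    (hswap : ∀ i, 1 ≤ i → i ≤ (p - 2) / 2 →
      φe (2 * i - 1) = m - p + i ∧ φe (2 * i) = i)
    (hbaseodd : ∀ i, (p - 2) / 2 ≤ i → i ≤ p - 1 → φe (2 * i + 1) = i + 1)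
    (hbaseeven : ∀ i, (p - 2) / 2 < i → i ≤ p → φe (2 * i) = m - p + i)
    (hlast : φe (2 * p + 1) = p + ℓ + 1)
    (hφx : ∀ i < ℓ, φx i = p + i + 1)
    (hφy : ∀ i < ℓ, φy i = m - p - i)
    (sv sx sy : ℕ → ℕ)
    (hsv0 : sv 0 = φe 1)
    (hsvi : ∀ i, 1 ≤ i → i ≤ 2 * p → sv i = φe i + φe (i + 1))
    (hsx0 : sx 0 = φe (2 * p + 1) + φx 0 + φy 0)
    (hsxi : ∀ i, 1 ≤ i → i ≤ ℓ - 1 → sx i = φx (i - 1) + φx i + φy i)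
    (hsxl : sx ℓ = φx (ℓ - 1))
    (hsy : ∀ i < ℓ, sy i = φy i) :
    -- the set of labels used
    ({n : ℕ | ∃ i, 1 ≤ i ∧ i ≤ 2 * p + 1 ∧ φe i = n} ∪
      {n : ℕ | ∃ i < ℓ, φx i = n} ∪ {n : ℕ | ∃ i < ℓ, φy i = n} =
      Set.Icc 1 (p + ℓ + 1) ∪ Set.Icc (m - p - ℓ + 1) m) ∧
    -- the set of residues of the vertex sums modulo m+2
    ({x : ℕ | ∃ i ≤ 2 * p, sv i % (m + 2) = x} ∪
      {x : ℕ | ∃ i ≤ ℓ, sx i % (m + 2) = x} ∪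
      {x : ℕ | ∃ i < ℓ, sy i % (m + 2) = x} =
      Set.Icc 0 (p + ℓ) ∪ (Set.Icc (m - p - ℓ + 1) (m + 1) \ {m - 1})) ∧
    -- the only two vertices with equal residue are x₀ and x_ℓ
    (∀ i ≤ 2 * p, ∀ j ≤ 2 * p, sv i % (m + 2) = sv j % (m + 2) → i = j) ∧
    (∀ i ≤ ℓ, ∀ j ≤ ℓ, sx i % (m + 2) = sx j % (m + 2) →
      i = j ∨ ({i, j} : Set ℕ) = {0, ℓ}) ∧
    (∀ i < ℓ, ∀ j < ℓ, sy i % (m + 2) = sy j % (m + 2) → i = j) ∧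
    (∀ i ≤ 2 * p, ∀ j ≤ ℓ, sv i % (m + 2) ≠ sx j % (m + 2)) ∧
    (∀ i ≤ 2 * p, ∀ j < ℓ, sv i % (m + 2) ≠ sy j % (m + 2)) ∧
    (∀ i ≤ ℓ, ∀ j < ℓ, sx i % (m + 2) ≠ sy j % (m + 2)) ∧
    -- x₀ and x_ℓ nevertheless have different vertex sums
    (sx 0 = m + p + ℓ + 2 ∧ sx ℓ = p + ℓ) := by
  have hp₂ : 2 ≤ p := by obtain ⟨k, rfl⟩ := hpeven; omega
  have hpath (i : ℕ) (hi₁ : 1 ≤ i) (hi₂ : i ≤ 2 * p) : φe i = pathLabel p m i :=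
    pathLabel_eq hpeven hswap hbaseodd hbaseeven hi₁ hi₂
  have hsx (i : ℕ) (hi : i ≤ ℓ) : sx i = legSum p ℓ m i :=
    legSum_eq hℓ (by omega) hlast hφx hφy hsx0 hsxi hsxl hi
  have hsv_mod (i : ℕ) (hi : i ≤ 2 * p) : sv i % (m + 2) = pathResidue p ℓ m i := by
    rw [pathSum_eq hp hpeven (by omega) hpath hlast hsv0 hsvi hi, pathSum_mod hm hi]
  have hsx_mod (i : ℕ) (hi : i ≤ ℓ) : sx i % (m + 2) = legResidue p ℓ i := by
    rw [hsx i hi, legSum_mod hm hi]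
  have hsy_mod (i : ℕ) (hi : i < ℓ) : sy i % (m + 2) = m - p - i := by
    rw [hsy i hi, hφy i hi, Nat.mod_eq_of_lt (by omega)]
  refine ⟨edgeLabels_eq hpeven (by omega) hpath hlast hφx hφy, ?_,
    fun i hi j hj h ↦ pathResidue_injOn hℓ hm hi hj (by rwa [hsv_mod i hi, hsv_mod j hj] at h),
    fun i hi j hj h ↦ legResidue_eq_legResidue hi hj (by rwa [hsx_mod i hi, hsx_mod j hj] at h),
    fun i hi j hj h ↦ by rw [hsy_mod i hi, hsy_mod j hj] at h; omega,
    fun i hi j hj ↦ hsv_mod i hi ▸ hsx_mod j hj ▸ pathResidue_ne_legResidue hp hm hi j,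
    fun i hi j hj ↦ hsv_mod i hi ▸ hsy_mod j hj ▸ pathResidue_ne_pendant hm hi hj,
    fun i hi j hj ↦ hsx_mod i hi ▸ hsy_mod j hj ▸ legResidue_ne_pendant hm i hj,
    by rw [hsx 0 ℓ.zero_le, legSum, if_pos rfl],
    by rw [hsx ℓ le_rfl, legSum, if_neg (by omega), if_pos rfl]⟩
  rw [← vertexSumResidues_eq hp₂ hm, ← Set.image_congr (s := Set.Iic (2 * p)) hsv_mod,
    ← Set.image_congr (s := Set.Iic ℓ) hsx_mod, ← Set.image_congr (s := Set.Iio ℓ) hsy_mod]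
  rfl
end
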